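/- arXiv:1705.09561 — 6 statements merged into one kernel-verified Lean document; each statement's English description precedes it below -/
import Mathlib

section
/- Let ε > 0, a > 0, and M be a positive integer. Fix a set X (the record space), a positive integer n, and a partition map π : {1,…,n} → {1,…,M} assigning each record index to one of M blocks. For each block l = 1,…,M let T_l be an arbitrary real-valued function of the block's records. For a database D ∈ X^n define g(D) = √M · (1/M) · Σ_{l=1}^M clamp_a( T_l(D restricted to block l) ), where clamp_a(x) = max(−a, min(a, x)). The mechanism A(D) releases g(D) + η where η is drawn from the Laplace distribution Lap(0, 2a/(√M · ε)). Then A satisfies ε-differential privacy: for any two databases D, D' ∈ X^n that differ in exactly one coordinate and any Borel set S ⊆ ℝ, the probability that A(D) ∈ S is at most exp(ε) times the probability that A(D') ∈ S. -/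
open MeasureTheory Real

/-- `clamp a x = max (-a) (min a x)`: truncation of `x` to the interval `[-a, a]`. -/
noncomputable def clamp (a x : ℝ) : ℝ := max (-a) (min a x)

/-- The Laplace distribution with location `m` and scale `s`, as the measure on `ℝ`
with density `x ↦ (1/(2s)) exp (-|x - m| / s)` with respect to Lebesgue measure. -/
noncomputable def laplaceMeasure (m s : ℝ) : Measure ℝ :=
  volume.withDensity (fun x => ENNReal.ofReal ((1 / (2 * s)) * Real.exp (-|x - m| / s)))

lemma clamp_mem (a x : ℝ) (ha : 0 < a) : -a ≤ clamp a x ∧ clamp a x ≤ a := by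
  unfold clamp
  constructor
  · exact le_max_left _ _
  · exact max_le (by linarith) (min_le_left _ _)

lemma laplace_comp (m m' s : ℝ) (hs : 0 < s) (S : Set ℝ) (hS : MeasurableSet S) :
    laplaceMeasure m s S ≤ ENNReal.ofReal (Real.exp (|m - m'| / s)) * laplaceMeasure m' s S := by
  unfold laplaceMeasure
  rw [withDensity_apply _ hS, withDensity_apply _ hS, ← lintegral_const_mul]
  · apply lintegral_mono
    intro x
    dsimp only
    rw [← ENNReal.ofReal_mul (Real.exp_nonneg _)]
    apply ENNReal.ofReal_le_ofReal
    rw [show Real.exp (|m - m'| / s) * (1 / (2 * s) * Real.exp (-|x - m'| / s))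
        = 1 / (2 * s) * (Real.exp (|m - m'| / s) * Real.exp (-|x - m'| / s)) by ring,
      ← Real.exp_add]
    apply mul_le_mul_of_nonneg_left _ (by positivity)
    apply Real.exp_le_exp.mpr
    rw [← add_div, div_le_div_iff_of_pos_right hs]
    have h1 := abs_sub_abs_le_abs_sub (x - m') (x - m)
    have h2 : (x - m') - (x - m) = m - m' := by ring
    rw [h2] at h1
    linarith
  · fun_prop

/-- The subsample-and-aggregate mechanism releasing the rescaled average of truncated
block statistics plus Laplace noise `Lap(0, 2a/(√M ε))` satisfies `ε`-differential
privacy. -/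
theorem stmt0 {X : Type*} (ε a : ℝ) (hε : 0 < ε) (ha : 0 < a)
    (M n : ℕ) (hM : 0 < M) (hn : 0 < n)
    (pt : Fin n → Fin M)
    (T : (l : Fin M) → ({i : Fin n // pt i = l} → X) → ℝ)
    (g : (Fin n → X) → ℝ)
    (hg : ∀ D : Fin n → X,
      g D = Real.sqrt M * ((1 / (M : ℝ)) *
        ∑ l : Fin M, clamp a (T l (fun i => D i.1))))
    (A : (Fin n → X) → Measure ℝ)
    (hA : ∀ D : Fin n → X, A D = laplaceMeasure (g D) (2 * a / (Real.sqrt M * ε)))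
    (D D' : Fin n → X)
    (hneighbor : ∃ i : Fin n, D i ≠ D' i ∧ ∀ j : Fin n, j ≠ i → D j = D' j)
    (S : Set ℝ) (hS : MeasurableSet S) :
    A D S ≤ ENNReal.ofReal (Real.exp ε) * A D' S := by
  obtain ⟨i0, _, hagree⟩ := hneighbor
  have hMR : (0:ℝ) < M := by exact_mod_cast hM
  have hsqrt : (0:ℝ) < Real.sqrt M := Real.sqrt_pos.mpr hMR
  have hsq : Real.sqrt M * Real.sqrt M = M := Real.mul_self_sqrt hMR.le
  set s : ℝ := 2 * a / (Real.sqrt M * ε) with hs_def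
  have hs : 0 < s := by positivity
  -- bound the difference of g
  set f : Fin M → ℝ := fun l => clamp a (T l (fun i => D i.1)) with hf
  set f' : Fin M → ℝ := fun l => clamp a (T l (fun i => D' i.1)) with hf'
  have hterm : ∀ l : Fin M, l ≠ pt i0 → f l = f' l := by
    intro l hl
    have : (fun i : {i : Fin n // pt i = l} => D i.1) =
        (fun i : {i : Fin n // pt i = l} => D' i.1) := by
      funext i
      exact hagree i.1 (fun h => hl (by rw [← i.2, h]))
    simp only [hf, hf', this]
  have hsum : (∑ l : Fin M, f l) - (∑ l : Fin M, f' l) = f (pt i0) - f' (pt i0) := by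
    rw [← Finset.sum_sub_distrib, Finset.sum_eq_single (pt i0)]
    · intro l _ hl; rw [hterm l hl, sub_self]
    · intro h; exact absurd (Finset.mem_univ _) h
  have hfbd := clamp_mem a (T (pt i0) (fun i => D i.1)) ha
  have hfbd' := clamp_mem a (T (pt i0) (fun i => D' i.1)) ha
  have hdiff : |g D - g D'| ≤ 2 * a / Real.sqrt M := by
    rw [hg D, hg D', ← mul_sub, ← mul_sub, hsum, abs_mul, abs_mul]
    rw [abs_of_pos hsqrt, abs_of_pos (by positivity : (0:ℝ) < 1 / (M:ℝ))]
    have h1 : |f (pt i0) - f' (pt i0)| ≤ 2 * a := by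
      apply abs_le.mpr
      constructor <;> simp only [hf, hf'] <;>
        [linarith [hfbd.1, hfbd'.2]; linarith [hfbd.2, hfbd'.1]]
    calc Real.sqrt M * (1 / (M:ℝ) * |f (pt i0) - f' (pt i0)|)
        ≤ Real.sqrt M * (1 / (M:ℝ) * (2 * a)) := by
          apply mul_le_mul_of_nonneg_left _ hsqrt.le
          exact mul_le_mul_of_nonneg_left h1 (by positivity)
      _ = 2 * a / Real.sqrt M := by
          field_simp
          nlinarith [hsq]
  have hratio : |g D - g D'| / s ≤ ε := by
    rw [div_le_iff₀ hs, hs_def]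
    calc |g D - g D'| ≤ 2 * a / Real.sqrt M := hdiff
      _ = ε * (2 * a / (Real.sqrt M * ε)) := by field_simp
  calc A D S ≤ ENNReal.ofReal (Real.exp (|g D - g D'| / s)) * A D' S := by
        rw [hA D, hA D']; exact laplace_comp _ _ _ hs S hS
    _ ≤ ENNReal.ofReal (Real.exp ε) * A D' S := by
        exact mul_le_mul_left (ENNReal.ofReal_le_ofReal
          (Real.exp_le_exp.mpr hratio)) _
end

section
/- Laplace mechanism: let Δ > 0, ε > 0 and set λ = Δ/ε. For any real numbers m, m' with |m − m'| ≤ Δ, and for every Borel set S ⊆ ℝ, the Laplace measure satisfies Lap(m, λ)(S) ≤ exp(ε) · Lap(m', λ)(S). Consequently, if f is a real-valued function of databases whose value changes by at most Δ between any two neighboring databases, then the mechanism releasing f(D) + η with η ~ Lap(0, Δ/ε) satisfies ε-differential privacy. -/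
open MeasureTheory Real

lemma laplace_key (Δ ε : ℝ) (hΔ : 0 < Δ) (hε : 0 < ε) (lam : ℝ) (hlam : lam = Δ / ε)
    (m m' : ℝ) (h : |m - m'| ≤ Δ) (S : Set ℝ) (hS : MeasurableSet S) :
    laplaceMeasure m lam S ≤ ENNReal.ofReal (Real.exp ε) * laplaceMeasure m' lam S := by
  have hlam0 : 0 < lam := hlam ▸ div_pos hΔ hε
  rw [laplaceMeasure, laplaceMeasure, withDensity_apply _ hS, withDensity_apply _ hS,
    ← lintegral_const_mul' _ _ ENNReal.ofReal_ne_top]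
  refine setLIntegral_mono' hS fun x _ => ?_
  rw [← ENNReal.ofReal_mul (Real.exp_nonneg _)]
  apply ENNReal.ofReal_le_ofReal
  have hΔε : Δ = ε * lam := by rw [hlam]; field_simp
  have h1 : |x - m'| - |x - m| ≤ |m - m'| := by
    have := abs_sub_abs_le_abs_sub (x - m') (x - m)
    have h2 : x - m' - (x - m) = m - m' := by ring
    rw [h2] at this
    linarith
  have h3 : -|x - m| / lam ≤ ε + -|x - m'| / lam := by
    have he : ε + -|x - m'| / lam = (ε * lam + -|x - m'|) / lam := by field_simp
    rw [he, div_le_div_iff_of_pos_right hlam0]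
    linarith
  have h4 : Real.exp (-|x - m| / lam) ≤ Real.exp ε * Real.exp (-|x - m'| / lam) := by
    rw [← Real.exp_add]; exact Real.exp_le_exp.mpr h3
  have hc : (0:ℝ) ≤ 1 / (2 * lam) := by positivity
  calc 1 / (2 * lam) * Real.exp (-|x - m| / lam)
      ≤ 1 / (2 * lam) * (Real.exp ε * Real.exp (-|x - m'| / lam)) :=
        mul_le_mul_of_nonneg_left h4 hc
    _ = Real.exp ε * (1 / (2 * lam) * Real.exp (-|x - m'| / lam)) := by ring

/-- The Laplace mechanism: for locations at distance at most `Δ` and scale `Δ/ε`, the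
Laplace measures of any Borel set differ by at most a factor `exp ε`. Consequently,
adding `Lap(0, Δ/ε)` noise to any function of databases with global sensitivity at
most `Δ` (for an arbitrary neighboring relation) yields an `ε`-differentially
private mechanism. -/
theorem stmt2 (Δ ε : ℝ) (hΔ : 0 < Δ) (hε : 0 < ε) (lam : ℝ) (hlam : lam = Δ / ε) :
    (∀ m m' : ℝ, |m - m'| ≤ Δ → ∀ S : Set ℝ, MeasurableSet S →
      laplaceMeasure m lam S ≤ ENNReal.ofReal (Real.exp ε) * laplaceMeasure m' lam S) ∧
    (∀ (DB : Type) (neighbor : DB → DB → Prop) (f : DB → ℝ),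
      (∀ D D' : DB, neighbor D D' → |f D - f D'| ≤ Δ) →
      ∀ D D' : DB, neighbor D D' → ∀ S : Set ℝ, MeasurableSet S →
        laplaceMeasure (f D) (Δ / ε) S ≤
          ENNReal.ofReal (Real.exp ε) * laplaceMeasure (f D') (Δ / ε) S) := by
  constructor
  · exact fun m m' h S hS => laplace_key Δ ε hΔ hε lam hlam m m' h S hS
  · intro DB neighbor f hf D D' hN S hS
    exact laplace_key Δ ε hΔ hε (Δ/ε) rfl (f D) (f D') (hf D D' hN) S hS
end

section
/- Cross-covariance of full-sample and subsample least-squares estimators: let X be an n × (p+1) real matrix with XᵀX invertible, let S ⊆ {1,…,n} be a subset of row indices, and let X_S denote the submatrix of X consisting of the rows in S, with X_SᵀX_S invertible. Let y be an n-dimensional random vector with E[y] = Xβ for some β ∈ ℝ^{p+1} and covariance matrix Cov(y) = σ² I_n, and let y_S be the subvector of y indexed by S. Define β̂ = (XᵀX)⁻¹Xᵀy and β̂_S = (X_SᵀX_S)⁻¹X_Sᵀy_S. Then the cross-covariance matrix Cov(β̂, β̂_S) = E[(β̂ − E β̂)(β̂_S − E β̂_S)ᵀ] equals σ² (XᵀX)⁻¹.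 -/
open MeasureTheory Matrix

private lemma int_mul {Ω : Type*} [MeasurableSpace Ω] {μ : Measure Ω} {f g : Ω → ℝ}
    (hf : MemLp f 2 μ) (hg : MemLp g 2 μ) : Integrable (fun ω => f ω * g ω) μ := by
  have h := (hf.add hg).integrable_sq
  have hf2 := hf.integrable_sq
  have hg2 := hg.integrable_sq
  have heq : (fun ω => f ω * g ω) = fun ω => ((f ω + g ω)^2 - f ω^2 - g ω^2)/2 := by
    funext ω; ring
  rw [heq]
  exact ((h.sub hf2).sub hg2).div_const 2

/-- Cross-covariance of the full-sample and subsample least-squares estimators: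
with `E[y] = Xβ` and `Cov(y) = σ² Iₙ`, the cross-covariance matrix of
`β̂ = (XᵀX)⁻¹Xᵀy` and `β̂_S = (X_SᵀX_S)⁻¹X_Sᵀy_S` equals `σ² (XᵀX)⁻¹`. -/
theorem stmt4 {Ω : Type*} [MeasurableSpace Ω] (μ : Measure Ω) [IsProbabilityMeasure μ]
    (n p : ℕ) (X : Matrix (Fin n) (Fin (p + 1)) ℝ)
    (hXinv : IsUnit (Xᵀ * X).det)
    (S : Finset (Fin n))
    (XS : Matrix {i : Fin n // i ∈ S} (Fin (p + 1)) ℝ)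
    (hXS : ∀ (i : {i : Fin n // i ∈ S}) (j : Fin (p + 1)), XS i j = X i.1 j)
    (hXSinv : IsUnit (XSᵀ * XS).det)
    (y : Ω → Fin n → ℝ) (β : Fin (p + 1) → ℝ) (σ : ℝ)
    (hL2 : ∀ i : Fin n, MemLp (fun ω => y ω i) 2 μ)
    (hmean : ∀ i : Fin n, (∫ ω, y ω i ∂μ) = X.mulVec β i)
    (hcov : ∀ i k : Fin n,
      (∫ ω, (y ω i - X.mulVec β i) * (y ω k - X.mulVec β k) ∂μ) =
        if i = k then σ ^ 2 else 0)
    (βhat : Ω → Fin (p + 1) → ℝ)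
    (hβhat : ∀ ω, βhat ω = ((Xᵀ * X)⁻¹ * Xᵀ).mulVec (y ω))
    (βhatS : Ω → Fin (p + 1) → ℝ)
    (hβhatS : ∀ ω, βhatS ω = ((XSᵀ * XS)⁻¹ * XSᵀ).mulVec (fun i => y ω i.1)) :
    ∀ j k : Fin (p + 1),
      (∫ ω, (βhat ω j - ∫ ω', βhat ω' j ∂μ) * (βhatS ω k - ∫ ω', βhatS ω' k ∂μ) ∂μ) =
        σ ^ 2 * (Xᵀ * X)⁻¹ j k := by
  intro j k
  set A := (Xᵀ * X)⁻¹ * Xᵀ with hA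
  set B := (XSᵀ * XS)⁻¹ * XSᵀ with hB
  set z : Ω → Fin n → ℝ := fun ω i => y ω i - X.mulVec β i with hzdef
  have hz2 : ∀ i, MemLp (fun ω => z ω i) 2 μ := fun i => (hL2 i).sub (memLp_const _)
  have hyint : ∀ i, Integrable (fun ω => y ω i) μ := fun i => (hL2 i).integrable one_le_two
  -- centered full estimator
  have hbj : ∀ ω, βhat ω j - (∫ ω', βhat ω' j ∂μ) = ∑ i, A j i * z ω i := by
    have hint : (∫ ω', βhat ω' j ∂μ) = ∑ i, A j i * X.mulVec β i := by
      calc (∫ ω', βhat ω' j ∂μ) = ∫ ω', ∑ i, A j i * y ω' i ∂μ := by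
            simp only [hβhat, Matrix.mulVec, dotProduct]
        _ = ∑ i, ∫ ω', A j i * y ω' i ∂μ :=
            integral_finset_sum _ (fun i _ => (hyint i).const_mul _)
        _ = ∑ i, A j i * X.mulVec β i := by
            refine Finset.sum_congr rfl fun i _ => ?_
            rw [integral_const_mul, hmean i]
    intro ω
    rw [hint, hβhat]
    simp only [Matrix.mulVec, dotProduct]
    rw [← Finset.sum_sub_distrib]
    exact Finset.sum_congr rfl fun i _ => by simp only [hzdef, Matrix.mulVec, dotProduct]; ring
  -- centered subsample estimator
  have hbk : ∀ ω, βhatS ω k - (∫ ω', βhatS ω' k ∂μ) = ∑ m : {i : Fin n // i ∈ S}, B k m * z ω m.1 := by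
    have hint : (∫ ω', βhatS ω' k ∂μ) = ∑ m : {i : Fin n // i ∈ S}, B k m * X.mulVec β m.1 := by
      calc (∫ ω', βhatS ω' k ∂μ) = ∫ ω', ∑ m : {i : Fin n // i ∈ S}, B k m * y ω' m.1 ∂μ := by
            simp only [hβhatS, Matrix.mulVec, dotProduct]
        _ = ∑ m : {i : Fin n // i ∈ S}, ∫ ω', B k m * y ω' m.1 ∂μ :=
            integral_finset_sum _ (fun m _ => (hyint m.1).const_mul _)
        _ = ∑ m : {i : Fin n // i ∈ S}, B k m * X.mulVec β m.1 := by
            refine Finset.sum_congr rfl fun m _ => ?_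
            rw [integral_const_mul, hmean m.1]
    intro ω
    rw [hint, hβhatS]
    simp only [Matrix.mulVec, dotProduct]
    rw [← Finset.sum_sub_distrib]
    exact Finset.sum_congr rfl fun m _ => by simp only [hzdef, Matrix.mulVec, dotProduct]; ring
  -- main integral computation
  have hint2 : ∀ (i : Fin n) (m : {i : Fin n // i ∈ S}),
      Integrable (fun ω => A j i * z ω i * (B k m * z ω m.1)) μ := by
    intro i m
    have : (fun ω => A j i * z ω i * (B k m * z ω m.1))
        = fun ω => (A j i * B k m) * (z ω i * z ω m.1) := by funext ω; ring
    rw [this]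
    exact (int_mul (hz2 i) (hz2 m.1)).const_mul _
  have hmain : (∫ ω, (βhat ω j - ∫ ω', βhat ω' j ∂μ) * (βhatS ω k - ∫ ω', βhatS ω' k ∂μ) ∂μ)
      = ∑ i, ∑ m : {i : Fin n // i ∈ S}, A j i * B k m * (if i = m.1 then σ^2 else 0) := by
    simp_rw [hbj, hbk, Finset.sum_mul_sum]
    rw [integral_finset_sum _ (fun i _ => integrable_finset_sum _ (fun m _ => hint2 i m))]
    refine Finset.sum_congr rfl fun i _ => ?_
    rw [integral_finset_sum _ (fun m _ => hint2 i m)]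
    refine Finset.sum_congr rfl fun m _ => ?_
    have : (fun ω => A j i * z ω i * (B k m * z ω m.1))
        = fun ω => (A j i * B k m) * (z ω i * z ω m.1) := by funext ω; ring
    rw [this, integral_const_mul]
    congr 1
    exact hcov i m.1
  rw [hmain]
  -- algebra: collapse the double sum
  have hsum : (∑ i, ∑ m : {i : Fin n // i ∈ S}, A j i * B k m * (if i = m.1 then σ^2 else 0))
      = σ^2 * ∑ m : {i : Fin n // i ∈ S}, A j m.1 * B k m := by
    rw [Finset.sum_comm, Finset.mul_sum]
    refine Finset.sum_congr rfl fun m _ => ?_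
    rw [Finset.sum_eq_single m.1]
    · simp; ring
    · intro i _ hi; rw [if_neg hi, mul_zero]
    · simp
  rw [hsum]
  -- matrix identity
  have hkey : (∑ m : {i : Fin n // i ∈ S}, A j m.1 * B k m) = (Xᵀ * X)⁻¹ j k := by
    have h1 : ∀ m : {i : Fin n // i ∈ S}, A j m.1 = ((Xᵀ * X)⁻¹ * XSᵀ) j m := by
      intro m
      simp only [hA, Matrix.mul_apply, transpose_apply, hXS]
    have h2 : (∑ m : {i : Fin n // i ∈ S}, A j m.1 * B k m)
        = (((Xᵀ * X)⁻¹ * XSᵀ) * Bᵀ) j k := by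
      rw [Matrix.mul_apply]
      exact Finset.sum_congr rfl fun m _ => by rw [h1 m, transpose_apply]
    rw [h2, hB]
    have hBt : ((XSᵀ * XS)⁻¹ * XSᵀ)ᵀ = XS * (XSᵀ * XS)⁻¹ := by
      rw [Matrix.transpose_mul, Matrix.transpose_nonsing_inv, Matrix.transpose_mul,
        Matrix.transpose_transpose]
    rw [hBt, Matrix.mul_assoc, ← Matrix.mul_assoc XSᵀ,
      Matrix.mul_nonsing_inv _ hXSinv, Matrix.mul_one]
  rw [hkey]
end

section
/- Positivity of the covariance between the full-data t-statistic and the rescaled average of partition t-statistics (with known σ): let X be an n × (p+1) real matrix with XᵀX invertible, and let the rows of X be partitioned into M disjoint blocks with block design matrices X_1,…,X_M, each X_lᵀX_l invertible. Let y be an n-dimensional random vector with E[y] = Xβ and Cov(y) = σ² I_n, and let y_l be the subvector of y for block l. Fix a coordinate j, let Σ_{j,j}(D) = σ²[(XᵀX)⁻¹]_{j,j} and Σ_{j,j}(D_l) = σ²[(X_lᵀX_l)⁻¹]_{j,j}, and define T(D) = [(XᵀX)⁻¹Xᵀy]_j / √Σ_{j,j}(D) and T(D_l) = [(X_lᵀX_l)⁻¹X_lᵀy_l]_j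 / √Σ_{j,j}(D_l). Then Cov( T(D), √M · (1/M) Σ_{l=1}^M T(D_l) ) = (1/M) Σ_{l=1}^M √Σ_{j,j}(D) / √( M⁻¹ Σ_{j,j}(D_l) ), which is strictly positive. -/
open MeasureTheory Matrix

/-- Positivity of the covariance between the full-data t-statistic and the rescaled
average of partition t-statistics (with known `σ`): the covariance equals
`(1/M) ∑_l √Σ_{j,j}(D) / √(M⁻¹ Σ_{j,j}(D_l))`, which is strictly positive. -/
theorem stmt5 {Ω : Type*} [MeasurableSpace Ω] (μ : Measure Ω) [IsProbabilityMeasure μ]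
    (n p M : ℕ) (hM : 0 < M)
    (X : Matrix (Fin n) (Fin (p + 1)) ℝ)
    (hXinv : IsUnit (Xᵀ * X).det)
    (pt : Fin n → Fin M)
    (Xb : (l : Fin M) → Matrix {i : Fin n // pt i = l} (Fin (p + 1)) ℝ)
    (hXb : ∀ (l : Fin M) (i : {i : Fin n // pt i = l}) (j : Fin (p + 1)),
      Xb l i j = X i.1 j)
    (hXbinv : ∀ l : Fin M, IsUnit ((Xb l)ᵀ * Xb l).det)
    (y : Ω → Fin n → ℝ) (β : Fin (p + 1) → ℝ) (σ : ℝ) (hσ : 0 < σ)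
    (hL2 : ∀ i : Fin n, MemLp (fun ω => y ω i) 2 μ)
    (hmean : ∀ i : Fin n, (∫ ω, y ω i ∂μ) = X.mulVec β i)
    (hcov : ∀ i k : Fin n,
      (∫ ω, (y ω i - X.mulVec β i) * (y ω k - X.mulVec β k) ∂μ) =
        if i = k then σ ^ 2 else 0)
    (j : Fin (p + 1))
    (Sjj : ℝ) (hSjj : Sjj = σ ^ 2 * (Xᵀ * X)⁻¹ j j)
    (hSjjpos : 0 < (Xᵀ * X)⁻¹ j j)
    (Sjjb : Fin M → ℝ) (hSjjb : ∀ l, Sjjb l = σ ^ 2 * ((Xb l)ᵀ * Xb l)⁻¹ j j)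
    (hSjjbpos : ∀ l, 0 < ((Xb l)ᵀ * Xb l)⁻¹ j j)
    (T : Ω → ℝ)
    (hT : ∀ ω, T ω = ((Xᵀ * X)⁻¹ * Xᵀ).mulVec (y ω) j / Real.sqrt Sjj)
    (Tb : Fin M → Ω → ℝ)
    (hTb : ∀ l ω, Tb l ω =
      (((Xb l)ᵀ * Xb l)⁻¹ * (Xb l)ᵀ).mulVec (fun i => y ω i.1) j / Real.sqrt (Sjjb l))
    (Tbar : Ω → ℝ)
    (hTbar : ∀ ω, Tbar ω = Real.sqrt M * ((1 / (M : ℝ)) * ∑ l : Fin M, Tb l ω)) :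
    (∫ ω, (T ω - ∫ ω', T ω' ∂μ) * (Tbar ω - ∫ ω', Tbar ω' ∂μ) ∂μ) =
      (1 / (M : ℝ)) * ∑ l : Fin M, Real.sqrt Sjj / Real.sqrt (Sjjb l / (M : ℝ)) ∧
    0 < (1 / (M : ℝ)) * ∑ l : Fin M, Real.sqrt Sjj / Real.sqrt (Sjjb l / (M : ℝ)) := by
  classical
  have hMpos : (0 : ℝ) < (M : ℝ) := by exact_mod_cast hM
  have hSjjpos' : 0 < Sjj := by rw [hSjj]; exact mul_pos (pow_pos hσ 2) hSjjpos
  have hSjjbpos' : ∀ l, 0 < Sjjb l := fun l => by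
    rw [hSjjb]; exact mul_pos (pow_pos hσ 2) (hSjjbpos l)
  have hspos : 0 < Real.sqrt Sjj := Real.sqrt_pos.2 hSjjpos'
  have hsbpos : ∀ l, 0 < Real.sqrt (Sjjb l) := fun l => Real.sqrt_pos.2 (hSjjbpos' l)
  set m : Fin n → ℝ := X.mulVec β with hm
  have hyint : ∀ i, Integrable (fun ω => y ω i) μ := fun i => (hL2 i).integrable one_le_two
  set z : Fin n → Ω → ℝ := fun i ω => y ω i - m i with hz
  have hz2 : ∀ i, MemLp (z i) 2 μ := fun i => (hL2 i).sub (memLp_const (m i))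
  have hzzint : ∀ i k, Integrable (fun ω => z i ω * z k ω) μ := by
    intro i k
    have h := L2.integrable_inner (𝕜 := ℝ) ((hz2 i).toLp _) ((hz2 k).toLp _)
    refine h.congr ?_
    filter_upwards [(hz2 i).coeFn_toLp, (hz2 k).coeFn_toLp] with ω h1 h2
    simp [h1, h2, RCLike.inner_apply, mul_comm]
  -- mean of linear combinations
  have hSmean : ∀ u : Fin n → ℝ, (∫ ω, ∑ i, u i * y ω i ∂μ) = ∑ i, u i * m i := by
    intro u
    rw [integral_finset_sum _ fun i _ => (hyint i).const_mul (u i)]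
    exact Finset.sum_congr rfl fun i _ => by rw [integral_const_mul, hmean]
  have hcentered : ∀ (u : Fin n → ℝ) (ω : Ω),
      (∑ i, u i * y ω i) - (∫ ω', ∑ i, u i * y ω' i ∂μ) = ∑ i, u i * z i ω := by
    intro u ω
    rw [hSmean, ← Finset.sum_sub_distrib]
    exact Finset.sum_congr rfl fun i _ => by simp [hz]; ring
  -- key covariance identity
  have key : ∀ u v : Fin n → ℝ,
      (∫ ω, (∑ i, u i * z i ω) * (∑ k, v k * z k ω) ∂μ) = σ ^ 2 * ∑ i, u i * v i := by
    intro u v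
    have h1 : ∀ ω : Ω, (∑ i, u i * z i ω) * (∑ k, v k * z k ω)
        = ∑ i, ∑ k, (u i * v k) * (z i ω * z k ω) := by
      intro ω
      rw [Finset.sum_mul_sum]
      exact Finset.sum_congr rfl fun i _ => Finset.sum_congr rfl fun k _ => by ring
    simp only [h1]
    rw [integral_finset_sum _ fun i _ =>
      integrable_finset_sum _ fun k _ => (hzzint i k).const_mul _]
    have h2 : ∀ i, (∫ ω, ∑ k, (u i * v k) * (z i ω * z k ω) ∂μ)
        = ∑ k, (u i * v k) * (if i = k then σ ^ 2 else 0) := by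
      intro i
      rw [integral_finset_sum _ fun k _ => (hzzint i k).const_mul _]
      refine Finset.sum_congr rfl fun k _ => ?_
      rw [integral_const_mul]
      congr 1
      simpa [hz] using hcov i k
    simp only [h2]
    rw [Finset.mul_sum]
    refine Finset.sum_congr rfl fun i _ => ?_
    simp [mul_ite, mul_zero, Finset.sum_ite_eq]
    ring
  -- coefficient vectors
  set a : Fin n → ℝ := fun i => ((Xᵀ * X)⁻¹ * Xᵀ) j i with ha
  set b : (l : Fin M) → {i : Fin n // pt i = l} → ℝ :=
    fun l i' => (((Xb l)ᵀ * Xb l)⁻¹ * (Xb l)ᵀ) j i' with hb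
  set c : Fin M → Fin n → ℝ :=
    fun l i => if h : pt i = l then b l ⟨i, h⟩ else 0 with hc
  have hsub : ∀ (l : Fin M) (w : Fin n → ℝ),
      (∑ i' : {i : Fin n // pt i = l}, b l i' * w i'.1) = ∑ i, c l i * w i := by
    intro l w
    rw [← Finset.sum_filter_of_ne (s := Finset.univ) (p := fun i => pt i = l)
      (f := fun i => c l i * w i) (fun x _ hx => by
        by_contra h
        simp [hc, dif_neg h] at hx)]
    rw [Finset.sum_subtype (p := fun i => pt i = l)
      (Finset.univ.filter fun i => pt i = l) (fun x => by simp) (fun i => c l i * w i)]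
    exact Finset.sum_congr rfl fun i' _ => by simp [hc, dif_pos i'.2]
  -- pointwise representations
  have hT' : ∀ ω, T ω = ∑ i, (a i / Real.sqrt Sjj) * y ω i := by
    intro ω
    rw [hT]
    simp only [Matrix.mulVec, dotProduct]
    rw [Finset.sum_div]
    exact Finset.sum_congr rfl fun i _ => by rw [ha]; ring
  have hTb' : ∀ l ω, Tb l ω = ∑ i, (c l i / Real.sqrt (Sjjb l)) * y ω i := by
    intro l ω
    rw [hTb]
    simp only [Matrix.mulVec, dotProduct]
    have h3 : (∑ i' : {i : Fin n // pt i = l},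
        (((Xb l)ᵀ * Xb l)⁻¹ * (Xb l)ᵀ) j i' * y ω i'.1) = ∑ i, c l i * y ω i :=
      hsub l (fun i => y ω i)
    rw [h3, Finset.sum_div]
    exact Finset.sum_congr rfl fun i _ => by ring
  set w0 : Fin n → ℝ :=
    fun i => Real.sqrt M * (1 / (M : ℝ)) * ∑ l, c l i / Real.sqrt (Sjjb l) with hw0
  have hTbar' : ∀ ω, Tbar ω = ∑ i, w0 i * y ω i := by
    intro ω
    rw [hTbar]
    have e1 : (∑ l, Tb l ω) = ∑ l, ∑ i, (c l i / Real.sqrt (Sjjb l)) * y ω i :=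
      Finset.sum_congr rfl fun l _ => hTb' l ω
    rw [e1, Finset.sum_comm]
    rw [Finset.mul_sum, Finset.mul_sum]
    refine Finset.sum_congr rfl fun i _ => ?_
    rw [hw0]
    simp only [Finset.mul_sum, Finset.sum_mul]
    exact Finset.sum_congr rfl fun l _ => by ring
  -- covariance computation
  have hcov' : (∫ ω, (T ω - ∫ ω', T ω' ∂μ) * (Tbar ω - ∫ ω', Tbar ω' ∂μ) ∂μ)
      = σ ^ 2 * ∑ i, (a i / Real.sqrt Sjj) * w0 i := by
    have eqn : ∀ ω, (T ω - ∫ ω', T ω' ∂μ) * (Tbar ω - ∫ ω', Tbar ω' ∂μ)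
        = (∑ i, (a i / Real.sqrt Sjj) * z i ω) * (∑ k, w0 k * z k ω) := by
      intro ω
      simp only [hT', hTbar']
      rw [hcentered, hcentered]
    simp only [eqn]
    exact key _ _
  -- matrix identity
  have hac : ∀ l, (∑ i, a i * c l i) = (Xᵀ * X)⁻¹ j j := by
    intro l
    have h0 : (∑ i, a i * c l i) = ∑ i, c l i * a i :=
      Finset.sum_congr rfl fun i _ => mul_comm _ _
    rw [h0, ← hsub l a]
    have hbe : ∀ i' : {i : Fin n // pt i = l},
        b l i' = ∑ k', ((Xb l)ᵀ * Xb l)⁻¹ j k' * Xb l i' k' := by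
      intro i'
      rw [hb]
      simp only [Matrix.mul_apply, Matrix.transpose_apply]
    have hae : ∀ i' : {i : Fin n // pt i = l},
        a i'.1 = ∑ k, (Xᵀ * X)⁻¹ j k * Xb l i' k := by
      intro i'
      rw [ha]
      simp only [Matrix.mul_apply, Matrix.transpose_apply]
      exact Finset.sum_congr rfl fun k _ => by rw [hXb l i' k]
    calc (∑ i' : {i : Fin n // pt i = l}, b l i' * a i'.1)
        = ∑ i' : {i : Fin n // pt i = l}, ∑ k', ∑ k,
            (((Xb l)ᵀ * Xb l)⁻¹ j k' * Xb l i' k') * ((Xᵀ * X)⁻¹ j k * Xb l i' k) := by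
          refine Finset.sum_congr rfl fun i' _ => ?_
          rw [hbe, hae, Finset.sum_mul_sum]
      _ = ∑ k', ∑ i' : {i : Fin n // pt i = l}, ∑ k,
            (((Xb l)ᵀ * Xb l)⁻¹ j k' * Xb l i' k') * ((Xᵀ * X)⁻¹ j k * Xb l i' k) :=
          Finset.sum_comm
      _ = ∑ k', ∑ k, ∑ i' : {i : Fin n // pt i = l},
            (((Xb l)ᵀ * Xb l)⁻¹ j k' * Xb l i' k') * ((Xᵀ * X)⁻¹ j k * Xb l i' k) :=
          Finset.sum_congr rfl fun k' _ => Finset.sum_comm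
      _ = ∑ k', ∑ k, ((Xb l)ᵀ * Xb l)⁻¹ j k' * (Xᵀ * X)⁻¹ j k *
            ∑ i' : {i : Fin n // pt i = l}, Xb l i' k' * Xb l i' k := by
          refine Finset.sum_congr rfl fun k' _ => Finset.sum_congr rfl fun k _ => ?_
          rw [Finset.mul_sum]
          exact Finset.sum_congr rfl fun i' _ => by ring
      _ = ∑ k, ∑ k', ((Xb l)ᵀ * Xb l)⁻¹ j k' * (Xᵀ * X)⁻¹ j k *
            ∑ i' : {i : Fin n // pt i = l}, Xb l i' k' * Xb l i' k :=
          Finset.sum_comm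
      _ = ∑ k, (∑ k', ((Xb l)ᵀ * Xb l)⁻¹ j k' * ((Xb l)ᵀ * Xb l) k' k) * (Xᵀ * X)⁻¹ j k := by
          refine Finset.sum_congr rfl fun k _ => ?_
          rw [Finset.sum_mul]
          refine Finset.sum_congr rfl fun k' _ => ?_
          rw [Matrix.mul_apply]
          simp only [Matrix.transpose_apply]
          ring
      _ = ∑ k, (1 : Matrix (Fin (p + 1)) (Fin (p + 1)) ℝ) j k * (Xᵀ * X)⁻¹ j k := by
          refine Finset.sum_congr rfl fun k _ => ?_
          congr 1
          rw [show (∑ k', ((Xb l)ᵀ * Xb l)⁻¹ j k' * ((Xb l)ᵀ * Xb l) k' k)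
              = (((Xb l)ᵀ * Xb l)⁻¹ * ((Xb l)ᵀ * Xb l)) j k from (Matrix.mul_apply).symm,
            Matrix.nonsing_inv_mul _ (hXbinv l)]
      _ = (Xᵀ * X)⁻¹ j j := by
          simp [Matrix.one_apply]
  -- final algebra
  have e1 : (∑ i, (a i / Real.sqrt Sjj) * w0 i)
      = ∑ l, (Real.sqrt M * (1 / (M : ℝ)) / (Real.sqrt Sjj * Real.sqrt (Sjjb l)))
          * ∑ i, a i * c l i := by
    calc (∑ i, (a i / Real.sqrt Sjj) * w0 i)
        = ∑ i, ∑ l, (a i / Real.sqrt Sjj) *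
            (Real.sqrt M * (1 / (M : ℝ)) * (c l i / Real.sqrt (Sjjb l))) := by
          refine Finset.sum_congr rfl fun i _ => ?_
          rw [hw0]
          simp only [Finset.mul_sum]
      _ = ∑ l, ∑ i, (a i / Real.sqrt Sjj) *
            (Real.sqrt M * (1 / (M : ℝ)) * (c l i / Real.sqrt (Sjjb l))) :=
          Finset.sum_comm
      _ = ∑ l, (Real.sqrt M * (1 / (M : ℝ)) / (Real.sqrt Sjj * Real.sqrt (Sjjb l)))
            * ∑ i, a i * c l i := by
          refine Finset.sum_congr rfl fun l _ => ?_
          rw [Finset.mul_sum]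
          exact Finset.sum_congr rfl fun i _ => by ring
  have hfin : σ ^ 2 * (∑ i, (a i / Real.sqrt Sjj) * w0 i)
      = (1 / (M : ℝ)) * ∑ l, Real.sqrt Sjj / Real.sqrt (Sjjb l / (M : ℝ)) := by
    rw [e1, Finset.mul_sum, Finset.mul_sum]
    refine Finset.sum_congr rfl fun l _ => ?_
    rw [hac l, Real.sqrt_div (hSjjbpos' l).le, div_div_eq_mul_div]
    have h1 : σ ^ 2 * (Xᵀ * X)⁻¹ j j = Real.sqrt Sjj * Real.sqrt Sjj := by
      rw [Real.mul_self_sqrt hSjjpos'.le, hSjj]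
    calc σ ^ 2 * (Real.sqrt M * (1 / (M : ℝ)) / (Real.sqrt Sjj * Real.sqrt (Sjjb l))
            * (Xᵀ * X)⁻¹ j j)
        = Real.sqrt M * (1 / (M : ℝ)) *
            (σ ^ 2 * (Xᵀ * X)⁻¹ j j / (Real.sqrt Sjj * Real.sqrt (Sjjb l))) := by ring
      _ = Real.sqrt M * (1 / (M : ℝ)) *
            (Real.sqrt Sjj * Real.sqrt Sjj / (Real.sqrt Sjj * Real.sqrt (Sjjb l))) := by
          rw [h1]
      _ = Real.sqrt M * (1 / (M : ℝ)) * (Real.sqrt Sjj / Real.sqrt (Sjjb l)) := by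
          rw [mul_div_mul_left _ _ (ne_of_gt hspos)]
      _ = 1 / (M : ℝ) * (Real.sqrt Sjj * Real.sqrt (M : ℝ) / Real.sqrt (Sjjb l)) := by
          ring
  constructor
  · rw [hcov', hfin]
  · have hterm : ∀ l : Fin M, 0 < Real.sqrt Sjj / Real.sqrt (Sjjb l / (M : ℝ)) := fun l =>
      div_pos hspos (Real.sqrt_pos.2 (div_pos (hSjjbpos' l) hMpos))
    have hne : (Finset.univ : Finset (Fin M)).Nonempty := ⟨⟨0, hM⟩, Finset.mem_univ _⟩
    exact mul_pos (by positivity) (Finset.sum_pos (fun l _ => hterm l) hne)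
end

section
/- Asymptotic distribution of the differentially private statistic under a diverging mean: let a > 0, ε > 0, let M be a positive integer, and for each n let Z_{n,1},…,Z_{n,M} be independent real random variables, each Gaussian with mean μ_n and variance 1, where μ_n → ∞. Let η be a random variable with distribution Lap(0, 2a/(√M·ε)), independent of all the Z_{n,l}. Then the random variable √M·(1/M)·Σ_{l=1}^M clamp_a(Z_{n,l}) + η converges in distribution, as n → ∞, to the Laplace distribution Lap(√M·a, 2a/(√M·ε)). -/
open MeasureTheory ProbabilityTheory Filter

lemma laplace_integral (m s : ℝ) (hs : 0 < s) (g : ℝ → ℝ) :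
    ∫ x, g x ∂(laplaceMeasure m s)
      = ∫ x, ((1 / (2 * s)) * Real.exp (-|x - m| / s)) * g x := by
  have hmeas : Measurable (fun x => Real.toNNReal ((1 / (2 * s)) * Real.exp (-|x - m| / s))) := by
    fun_prop
  have hrw : (fun x => ENNReal.ofReal ((1 / (2 * s)) * Real.exp (-|x - m| / s)))
      = fun x => ((Real.toNNReal ((1 / (2 * s)) * Real.exp (-|x - m| / s)) : NNReal) : ENNReal) :=
    rfl
  rw [laplaceMeasure, hrw, integral_withDensity_eq_integral_smul hmeas g]
  congr 1; ext x
  rw [NNReal.smul_def, Real.coe_toNNReal _ (by positivity)]; rfl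

lemma laplace_shift (m s : ℝ) (hs : 0 < s) (f : ℝ → ℝ) :
    ∫ x, f x ∂(laplaceMeasure m s) = ∫ x, f (x + m) ∂(laplaceMeasure 0 s) := by
  rw [laplace_integral m s hs, laplace_integral 0 s hs]
  rw [← integral_add_right_eq_self (fun x => ((1 / (2 * s)) * Real.exp (-|x - m| / s)) * f x) m]
  simp

lemma gauss_tail (a : ℝ) (μseq : ℕ → ℝ) (hμseq : Tendsto μseq atTop atTop) :
    Tendsto (fun n => (gaussianReal (μseq n) 1) (Set.Iio a)) atTop (nhds 0) := by
  have hmap : ∀ n, (gaussianReal (μseq n) 1) (Set.Iio a)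
      = (gaussianReal 0 1) (Set.Iio (a - μseq n)) := by
    intro n
    have h : (gaussianReal 0 1).map (· + μseq n) = gaussianReal (μseq n) 1 := by
      rw [gaussianReal_map_add_const]; simp
    rw [← h, Measure.map_apply (by fun_prop) measurableSet_Iio]
    congr 1
    ext x
    simp only [Set.mem_preimage, Set.mem_Iio]
    constructor <;> intro <;> linarith
  simp only [hmap]
  have hbot : Tendsto (fun n => a - μseq n) atTop atBot := by
    apply tendsto_atBot_add_const_left
    exact tendsto_neg_atBot_iff.mpr hμseq
  have hG : Tendsto (fun t => (gaussianReal 0 1) (Set.Iio t)) atBot (nhds 0) := by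
    have h1 : Tendsto (fun t => (gaussianReal 0 1) (Set.Ici t)) atBot
        (nhds ((gaussianReal 0 1) Set.univ)) := tendsto_measure_Ici_atBot _
    have h2 : ∀ t : ℝ, (gaussianReal 0 1) (Set.Iio t)
        = (gaussianReal 0 1) Set.univ - (gaussianReal 0 1) (Set.Ici t) := by
      intro t
      rw [← measure_compl measurableSet_Ici (measure_ne_top _ _)]
      congr 1
      simp
    simp only [h2]
    have := ENNReal.Tendsto.sub (tendsto_const_nhds
      (x := (gaussianReal 0 1) Set.univ) (f := atBot)) h1 (Or.inl (measure_ne_top _ _))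
    simpa using this
  exact hG.comp hbot

/-- Asymptotic distribution of the differentially private statistic under a diverging
mean: with independent Gaussians `Z_{n,l}` of mean `μ_n → ∞` and variance `1`, and an
independent Laplace noise `η ~ Lap(0, 2a/(√M ε))`, the statistic
`√M·(1/M)·∑_l clamp_a(Z_{n,l}) + η` converges in distribution to
`Lap(√M·a, 2a/(√M·ε))`. -/
theorem stmt9 {Ω : Type*} [MeasurableSpace Ω] (μ : Measure Ω) [IsProbabilityMeasure μ]
    (a ε : ℝ) (ha : 0 < a) (hε : 0 < ε) (M : ℕ) (hM : 0 < M)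
    (μseq : ℕ → ℝ) (hμseq : Tendsto μseq atTop atTop)
    (Z : ℕ → Fin M → Ω → ℝ)
    (hmeas : ∀ n l, Measurable (Z n l))
    (hindep : ∀ n, iIndepFun
      (Z n) μ)
    (hlaw : ∀ n l, Measure.map (Z n l) μ = gaussianReal (μseq n) 1)
    (η : Ω → ℝ) (hηmeas : Measurable η)
    (hηlaw : Measure.map η μ = laplaceMeasure 0 (2 * a / (Real.sqrt M * ε)))
    (hηindep : ∀ n, IndepFun (fun ω => (fun l : Fin M => Z n l ω)) η μ) :
    ∀ f : BoundedContinuousFunction ℝ ℝ,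
      Tendsto
        (fun n => ∫ ω,
          f (Real.sqrt M * ((1 / (M : ℝ)) * ∑ l : Fin M, clamp a (Z n l ω)) + η ω) ∂μ)
        atTop
        (nhds (∫ x, f x ∂(laplaceMeasure (Real.sqrt M * a) (2 * a / (Real.sqrt M * ε))))) := by
  intro f
  have hM0 : (0 : ℝ) < M := Nat.cast_pos.mpr hM
  have hsqrt : 0 < Real.sqrt M := Real.sqrt_pos.mpr hM0
  have hs : 0 < 2 * a / (Real.sqrt M * ε) := by positivity
  set s : ℝ := 2 * a / (Real.sqrt M * ε) with hs_def
  set c : ℝ := Real.sqrt M * a with hc_def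
  set S : ℕ → Ω → ℝ :=
    fun n ω => Real.sqrt M * ((1 / (M : ℝ)) * ∑ l : Fin M, clamp a (Z n l ω)) + η ω with hS_def
  set T : Ω → ℝ := fun ω => c + η ω with hT_def
  -- rewrite the limit integral
  have hclamp_cont : Continuous (clamp a) := by
    unfold clamp; fun_prop
  have hS_meas : ∀ n, Measurable (S n) := by
    intro n
    apply Measurable.add _ hηmeas
    apply Measurable.mul measurable_const
    apply Measurable.mul measurable_const
    exact Finset.measurable_sum _ fun l _ => hclamp_cont.measurable.comp (hmeas n l)
  have hL : ∫ x, f x ∂(laplaceMeasure c s) = ∫ ω, f (T ω) ∂μ := by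
    have hcont : Continuous fun x : ℝ => f (x + c) := by fun_prop
    rw [laplace_shift c s hs, ← hηlaw,
      integral_map hηmeas.aemeasurable hcont.aestronglyMeasurable]
    simp only [hT_def, add_comm]
  rw [hL]
  -- convergence in measure
  have hq := gauss_tail a μseq hμseq
  have htm : TendstoInMeasure μ S atTop T := by
    intro δ hδ
    have hsub : ∀ n, {ω | δ ≤ edist (S n ω) (T ω)} ⊆ ⋃ l : Fin M, Z n l ⁻¹' Set.Iio a := by
      intro n ω hω
      by_contra hnot
      simp only [Set.mem_iUnion, Set.mem_preimage, Set.mem_Iio, not_exists, not_lt] at hnot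
      have hcl : ∀ l : Fin M, clamp a (Z n l ω) = a := by
        intro l
        unfold clamp
        rw [min_eq_left (hnot l), max_eq_right (neg_le_self ha.le)]
      have hsum : ∑ l : Fin M, clamp a (Z n l ω) = (M : ℝ) * a := by
        simp [hcl, Finset.sum_const, nsmul_eq_mul]
      have hSn : S n ω = T ω := by
        simp only [hS_def, hT_def, hsum, hc_def]
        have : (1 / (M : ℝ)) * ((M : ℝ) * a) = a := by
          field_simp
        rw [this]
      rw [Set.mem_setOf_eq, hSn, edist_self] at hω
      exact absurd hω (not_le.mpr hδ)
    have hbound : ∀ n, μ {ω | δ ≤ edist (S n ω) (T ω)}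
        ≤ (M : ENNReal) * (gaussianReal (μseq n) 1) (Set.Iio a) := by
      intro n
      calc μ {ω | δ ≤ edist (S n ω) (T ω)}
          ≤ μ (⋃ l : Fin M, Z n l ⁻¹' Set.Iio a) := measure_mono (hsub n)
        _ ≤ ∑ l : Fin M, μ (Z n l ⁻¹' Set.Iio a) := measure_iUnion_fintype_le _ _
        _ = (M : ENNReal) * (gaussianReal (μseq n) 1) (Set.Iio a) := by
            have : ∀ l : Fin M, μ (Z n l ⁻¹' Set.Iio a)
                = (gaussianReal (μseq n) 1) (Set.Iio a) := by
              intro l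
              rw [← hlaw n l, Measure.map_apply (hmeas n l) measurableSet_Iio]
            simp [this, Finset.sum_const, nsmul_eq_mul]
    have hlim : Tendsto (fun n => (M : ENNReal) * (gaussianReal (μseq n) 1) (Set.Iio a))
        atTop (nhds 0) := by
      have := ENNReal.Tendsto.const_mul hq (Or.inr (ENNReal.natCast_ne_top M))
      simpa using this
    exact tendsto_of_tendsto_of_tendsto_of_le_of_le tendsto_const_nhds hlim
      (fun n => bot_le) hbound
  -- subsequence argument
  apply Filter.tendsto_of_subseq_tendsto
  intro ns hns
  have htm' : TendstoInMeasure μ (fun k => S (ns k)) atTop T := fun δ hδ => (htm δ hδ).comp hns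
  obtain ⟨ms, _, hae⟩ := htm'.exists_seq_tendsto_ae
  refine ⟨ms, ?_⟩
  apply tendsto_integral_of_dominated_convergence (fun _ => ‖f‖)
  · exact fun k => (f.continuous.measurable.comp (hS_meas (ns (ms k)))).aestronglyMeasurable
  · exact integrable_const _
  · exact fun k => Filter.Eventually.of_forall fun ω => f.norm_coe_le_norm _
  · filter_upwards [hae] with ω hω
    exact (f.continuous.tendsto _).comp hω
end

section
/- Upper bound on the asymptotic type II error probability (analytic form of Theorem 2): let a > 0, ε > 0, let M be a positive integer, and let 0 < α < 1. Set m = √M·a, s = 2a/(ε·√M), and r* = −log(α)·(2a/(ε·√M) + 1), and assume r* ≠ m. Let X have the Laplace distribution Lap(m, s). Then for every r with 0 < r ≤ r*, P(|X| < r) ≤ 𝟙{r* < m} · (1/2)·( α^{−1−ε√M/(2a)} − α^{1+ε√M/(2a)} )·exp(−εM/2) + 𝟙{r* > m} · ( 1 − (1/2)·α^{1+ε√M/(2a)}·( exp(εM/2) − exp(−εM/2) ) ). -/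
open MeasureTheory Real

lemma lap_cont (m s : ℝ) : Continuous fun x : ℝ => (1 / (2 * s)) * Real.exp (-|x - m| / s) := by
  fun_prop

lemma lap_val (m s u v : ℝ) (hs : 0 < s) (huv : u ≤ v) :
    laplaceMeasure m s (Set.Ioo u v)
      = ENNReal.ofReal (∫ x in u..v, (1 / (2 * s)) * Real.exp (-|x - m| / s)) := by
  rw [laplaceMeasure, withDensity_apply _ measurableSet_Ioo,
    ← ofReal_integral_eq_lintegral_ofReal]
  · rw [intervalIntegral.integral_of_le huv, integral_Ioc_eq_integral_Ioo]
  · exact ((lap_cont m s).integrableOn_Icc).mono_set Set.Ioo_subset_Icc_self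
  · filter_upwards with x
    positivity

lemma int_left (m s u v : ℝ) (hs : 0 < s) (huv : u ≤ v) (hv : v ≤ m) :
    (∫ x in u..v, (1 / (2 * s)) * Real.exp (-|x - m| / s))
      = (1 / 2) * Real.exp ((v - m) / s) - (1 / 2) * Real.exp ((u - m) / s) := by
  have hcong : Set.EqOn (fun x => (1 / (2 * s)) * Real.exp (-|x - m| / s))
      (fun x => (1 / (2 * s)) * Real.exp ((x - m) / s)) (Set.uIcc u v) := by
    intro x hx
    rw [Set.uIcc_of_le huv] at hx
    have hxm : x ≤ m := le_trans hx.2 hv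
    simp only
    rw [abs_of_nonpos (by linarith)]
    ring_nf
  rw [intervalIntegral.integral_congr hcong]
  have hderiv : ∀ x ∈ Set.uIcc u v, HasDerivAt (fun x => (1 / 2) * Real.exp ((x - m) / s))
      ((1 / (2 * s)) * Real.exp ((x - m) / s)) x := by
    intro x _
    have h1 : HasDerivAt (fun x : ℝ => (x - m) / s) (1 / s) x := by
      simpa using ((hasDerivAt_id x).sub_const m).div_const s
    have h2 := (h1.exp).const_mul (1 / 2 : ℝ)
    convert h2 using 1
    exacts [rfl, rfl, by ring]
  rw [intervalIntegral.integral_eq_sub_of_hasDerivAt hderiv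
    (by exact (by fun_prop : Continuous fun x : ℝ => (1 / (2 * s)) * Real.exp ((x - m) / s)).intervalIntegrable u v)]

lemma int_right (m s u v : ℝ) (hs : 0 < s) (huv : u ≤ v) (hu : m ≤ u) :
    (∫ x in u..v, (1 / (2 * s)) * Real.exp (-|x - m| / s))
      = (1 / 2) * Real.exp ((m - u) / s) - (1 / 2) * Real.exp ((m - v) / s) := by
  have hcong : Set.EqOn (fun x => (1 / (2 * s)) * Real.exp (-|x - m| / s))
      (fun x => (1 / (2 * s)) * Real.exp ((m - x) / s)) (Set.uIcc u v) := by
    intro x hx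
    rw [Set.uIcc_of_le huv] at hx
    have hxm : m ≤ x := le_trans hu hx.1
    simp only
    rw [abs_of_nonneg (by linarith)]
    ring_nf
  rw [intervalIntegral.integral_congr hcong]
  have hderiv : ∀ x ∈ Set.uIcc u v, HasDerivAt (fun x => -(1 / 2) * Real.exp ((m - x) / s))
      ((1 / (2 * s)) * Real.exp ((m - x) / s)) x := by
    intro x _
    have h1 : HasDerivAt (fun x : ℝ => (m - x) / s) (-1 / s) x := by
      simpa using ((hasDerivAt_id x).const_sub m).div_const s
    have h2 := (h1.exp).const_mul (-(1 / 2) : ℝ)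
    convert h2 using 1
    exacts [rfl, rfl, by ring]
  rw [intervalIntegral.integral_eq_sub_of_hasDerivAt hderiv
    (by exact (by fun_prop : Continuous fun x : ℝ => (1 / (2 * s)) * Real.exp ((m - x) / s)).intervalIntegrable u v)]
  ring

/-- Upper bound on the asymptotic type II error probability (analytic form of
Theorem 2): for `X ~ Lap(√M·a, 2a/(ε√M))`, `r* = −log α (2a/(ε√M) + 1)` with
`r* ≠ √M·a`, and any critical value `0 < r ≤ r*`,
`P(|X| < r) ≤ 𝟙{r* < √M a}·(1/2)(α^{−1−ε√M/2a} − α^{1+ε√M/2a})e^{−εM/2}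
  + 𝟙{r* > √M a}·(1 − (1/2)α^{1+ε√M/2a}(e^{εM/2} − e^{−εM/2}))`. -/
theorem stmt12 (a ε : ℝ) (ha : 0 < a) (hε : 0 < ε) (M : ℕ) (hM : 0 < M)
    (α : ℝ) (hα0 : 0 < α) (hα1 : α < 1)
    (m s rstar : ℝ)
    (hm : m = Real.sqrt M * a)
    (hs : s = 2 * a / (ε * Real.sqrt M))
    (hrstar : rstar = -Real.log α * (2 * a / (ε * Real.sqrt M) + 1))
    (hne : rstar ≠ m)
    (r : ℝ) (hr0 : 0 < r) (hr : r ≤ rstar) :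
    (laplaceMeasure m s {x : ℝ | |x| < r}).toReal ≤
      (if rstar < m then (1 : ℝ) else 0) *
        ((1 / 2) * (α ^ (-(1 + ε * Real.sqrt M / (2 * a))) -
          α ^ (1 + ε * Real.sqrt M / (2 * a))) * Real.exp (-(ε * M) / 2)) +
      (if m < rstar then (1 : ℝ) else 0) *
        (1 - (1 / 2) * α ^ (1 + ε * Real.sqrt M / (2 * a)) *
          (Real.exp (ε * M / 2) - Real.exp (-(ε * M) / 2))) := by
  have hMr : (0 : ℝ) < (M : ℝ) := by exact_mod_cast hM
  have hsqM : (0 : ℝ) < Real.sqrt M := Real.sqrt_pos.2 hMr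
  have hsqsq : Real.sqrt M * Real.sqrt M = (M : ℝ) := Real.mul_self_sqrt hMr.le
  have hs' : 0 < s := by rw [hs]; positivity
  have hm' : 0 < m := by rw [hm]; positivity
  have hlog : Real.log α < 0 := Real.log_neg hα0 hα1
  have hr' : 0 < rstar := lt_of_lt_of_le hr0 hr
  have hms : m / s = ε * M / 2 := by
    rw [hm, hs]
    field_simp
    linear_combination hsqsq
  have hrs : rstar / s = -Real.log α * (1 + ε * Real.sqrt M / (2 * a)) := by
    rw [hrstar, hs]
    field_simp
  have hset : {x : ℝ | |x| < r} = Set.Ioo (-r) r := by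
    ext x; simp [abs_lt, and_comm]
  have hα1p : α ^ (1 + ε * Real.sqrt M / (2 * a)) = Real.exp (-(rstar / s)) := by
    rw [Real.rpow_def_of_pos hα0, hrs]; ring_nf
  have hα1n : α ^ (-(1 + ε * Real.sqrt M / (2 * a))) = Real.exp (rstar / s) := by
    rw [Real.rpow_def_of_pos hα0, hrs]; ring_nf
  rcases lt_or_gt_of_ne hne with hlt | hgt
  · -- rstar < m
    rw [if_pos hlt, if_neg (by linarith), one_mul, zero_mul, add_zero]
    have hrm : r ≤ m := le_trans hr hlt.le
    rw [hset, lap_val m s _ _ hs' (by linarith), ENNReal.toReal_ofReal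
      (intervalIntegral.integral_nonneg (by linarith) (fun x _ => by positivity)),
      int_left m s _ _ hs' (by linarith) hrm]
    rw [hα1p, hα1n]
    have e1 : Real.exp (rstar / s) * Real.exp (-(ε * ↑M) / 2) = Real.exp ((rstar - m) / s) := by
      rw [← Real.exp_add]
      congr 1
      have : (rstar - m) / s = rstar / s - m / s := by ring
      rw [this, hms]; ring
    have e2 : Real.exp (-(rstar / s)) * Real.exp (-(ε * ↑M) / 2) = Real.exp ((-rstar - m) / s) := by
      rw [← Real.exp_add]
      congr 1
      have : (-rstar - m) / s = -(rstar / s) - m / s := by ring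
      rw [this, hms]; ring
    have key : (1 / 2) * (Real.exp (rstar / s) - Real.exp (-(rstar / s))) * Real.exp (-(ε * ↑M) / 2)
        = (1 / 2) * Real.exp ((rstar - m) / s) - (1 / 2) * Real.exp ((-rstar - m) / s) := by
      rw [← e1, ← e2]; ring
    rw [key]
    have i1 : Real.exp ((r - m) / s) ≤ Real.exp ((rstar - m) / s) :=
      Real.exp_le_exp.2 (by gcongr <;> linarith)
    have i2 : Real.exp ((-rstar - m) / s) ≤ Real.exp ((-r - m) / s) :=
      Real.exp_le_exp.2 (by gcongr <;> linarith)
    linarith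
  · -- m < rstar
    rw [if_neg (by linarith), if_pos hgt, zero_mul, one_mul, zero_add]
    have hsub : Set.Ioo (-r) r ⊆ Set.Ioo (-rstar) rstar :=
      Set.Ioo_subset_Ioo (by linarith) hr
    have hfin : laplaceMeasure m s (Set.Ioo (-rstar) rstar) ≠ ⊤ := by
      rw [lap_val m s _ _ hs' (by linarith)]; exact ENNReal.ofReal_ne_top
    have step1 : (laplaceMeasure m s {x : ℝ | |x| < r}).toReal
        ≤ (laplaceMeasure m s (Set.Ioo (-rstar) rstar)).toReal := by
      rw [hset]
      exact ENNReal.toReal_mono hfin (measure_mono hsub)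
    refine le_trans step1 ?_
    rw [lap_val m s _ _ hs' (by linarith), ENNReal.toReal_ofReal
      (intervalIntegral.integral_nonneg (by linarith) (fun x _ => by positivity))]
    have hii : ∀ u v : ℝ, IntervalIntegrable (fun x => (1 / (2 * s)) * Real.exp (-|x - m| / s)) volume u v :=
      fun u v => (lap_cont m s).intervalIntegrable u v
    rw [← intervalIntegral.integral_add_adjacent_intervals (b := m) (hii _ _) (hii _ _),
      int_left m s _ _ hs' (by linarith) le_rfl, int_right m s _ _ hs' (by linarith) le_rfl]
    rw [hα1p]
    have e1 : Real.exp (-(rstar / s)) * Real.exp (ε * ↑M / 2) = Real.exp ((m - rstar) / s) := by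
      rw [← Real.exp_add]
      congr 1
      have : (m - rstar) / s = m / s - rstar / s := by ring
      rw [this, hms]; ring
    have e2 : Real.exp (-(rstar / s)) * Real.exp (-(ε * ↑M) / 2) = Real.exp ((-rstar - m) / s) := by
      rw [← Real.exp_add]
      congr 1
      have : (-rstar - m) / s = -(rstar / s) - m / s := by ring
      rw [this, hms]; ring
    have key : 1 - (1 / 2) * Real.exp (-(rstar / s)) * (Real.exp (ε * ↑M / 2) - Real.exp (-(ε * ↑M) / 2))
        = 1 - (1 / 2) * Real.exp ((m - rstar) / s) + (1 / 2) * Real.exp ((-rstar - m) / s) := by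
      rw [← e1, ← e2]; ring
    rw [key]
    have z1 : (m - m) / s = 0 := by simp
    have z2 : Real.exp ((m - m) / s) = 1 := by rw [z1, Real.exp_zero]
    rw [z2]
    have hpos : 0 < Real.exp ((-rstar - m) / s) := Real.exp_pos _
    linarith
end
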